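/- For every n ≥ 1 and every k with 0 ≤ k ≤ n, the number of labeled plane trees with n edges having exactly k improper edges equals the number of labeled plane trees with n edges having exactly k proper edges; i.e., the statistics impr and prop are equidistributed over the set 𝒫_n of labeled plane trees with n edges. -/

import Mathlib

/-- A plane tree with labeled vertices: a root label together with an ordered
list of child subtrees.  (A plane tree is a rooted tree in which the children
of each node are linearly ordered.) -/
inductive LTree : Type where
  | node : ℕ → List LTree → LTree

namespace LTree

/-- The label of the root. -/
def rootLabel : LTree → ℕ
  | node a _ => a

/-- The list of child subtrees of the root. -/
def children : LTree → List LTree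
  | node _ cs => cs

/-- `deg_T(root)`: the number of children of the root. -/
def rootDeg (t : LTree) : ℕ := (children t).length

mutual
  /-- The list of all vertex labels of a tree. -/
  def labels : LTree → List ℕ
    | node a cs => a :: labelsList cs
  /-- The list of all vertex labels of a forest. -/
  def labelsList : List LTree → List ℕ
    | [] => []
    | c :: rest => labels c ++ labelsList rest
end

/-- `β(v)`: the smallest label occurring in the subtree `t` rooted at `v`. -/
def minLabel (t : LTree) : ℕ := (labels t).foldr min (rootLabel t)

/-- `min { j, β(c₁), …, β(cₖ) }` for a vertex `j` and a list of subtrees `c₁, …, cₖ`. -/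
def minOver (j : ℕ) (rest : List LTree) : ℕ := (rest.map minLabel).foldr min j

mutual
  /-- The list of edges of a tree, each recorded as a (parent label, child label)
  pair, in depth-first order. -/
  def edgeList : LTree → List (ℕ × ℕ)
    | node a cs => edgeListAux a cs
  def edgeListAux : ℕ → List LTree → List (ℕ × ℕ)
    | _, [] => []
    | a, c :: rest => (a, rootLabel c) :: (edgeList c ++ edgeListAux a rest)
end

mutual
  /-- The list of improper edges of a tree: if a vertex `j` has children
  `j₁, …, jₖ` (ordered left to right), the edge `(j, jᵢ)` is improper when
  `β(jᵢ) < min { j, β(j_{i+1}), …, β(jₖ) }`. -/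
  def improperEdges : LTree → List (ℕ × ℕ)
    | node a cs => improperEdgesAux a cs
  def improperEdgesAux : ℕ → List LTree → List (ℕ × ℕ)
    | _, [] => []
    | j, c :: rest =>
        (if minLabel c < minOver j rest then [(j, rootLabel c)] else [])
          ++ improperEdges c ++ improperEdgesAux j rest
end

mutual
  /-- The list of proper (i.e. non-improper) edges of a tree. -/
  def properEdges : LTree → List (ℕ × ℕ)
    | node a cs => properEdgesAux a cs
  def properEdgesAux : ℕ → List LTree → List (ℕ × ℕ)
    | _, [] => []
    | j, c :: rest =>
        (if minLabel c < minOver j rest then [] else [(j, rootLabel c)])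
          ++ properEdges c ++ properEdgesAux j rest
end

/-- `impr T`: the number of improper edges of `T`. -/
def impr (t : LTree) : ℕ := (improperEdges t).length

/-- `prop T`: the number of proper edges of `T`. -/
def propCount (t : LTree) : ℕ := (properEdges t).length

/-- The number of edges of `T`. -/
def edgeCount (t : LTree) : ℕ := (edgeList t).length

/-- `T` is a labeled plane tree with `n` edges: its `n + 1` vertices are labeled
bijectively with `{1, 2, …, n + 1}`. -/
def IsLPT (n : ℕ) (t : LTree) : Prop := (labels t).Perm (List.range' 1 (n + 1))

/-- `T` is increasing: vertex labels increase along every path from the root. -/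
inductive Increasing : LTree → Prop where
  | node (a : ℕ) (cs : List LTree) :
      (∀ c ∈ cs, a < rootLabel c) → (∀ c ∈ cs, Increasing c) → Increasing (node a cs)

end LTree

/-!
Cutting off the leftmost subtree `c` of the root of a tree `T = graft c u` leaves a tree `u`,
and the cut edge is improper iff `β(c) < β(u)`. Hence every tree is built from single
vertices by a binary grafting tree, and reflecting that binary tree (`mirror`) is a
label-preserving involution. It exchanges the two sides of every graft, and distinct labels
force `β(c) ≠ β(u)`, so the proper edges of `T` become exactly the improper edges of `mirror T`.
-/

namespace List

variable {α : Type*} [LinearOrder α]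

theorem foldr_min_mem_cons (l : List α) (b : α) : l.foldr min b ∈ b :: l := by
  induction l with
  | nil => exact mem_singleton_self b
  | cons a l ih =>
    rw [foldr_cons]
    rcases min_choice a (l.foldr min b) with h | h <;> rw [h]
    · simp
    · simp only [mem_cons] at ih ⊢
      tauto

theorem isLeast_foldr_min {l : List α} {b : α} (hb : b ∈ l) :
    IsLeast {x | x ∈ l} (l.foldr min b) := by
  refine ⟨?_, fun _ hx => min_le_of_le' b hx le_rfl⟩
  rcases mem_cons.mp (foldr_min_mem_cons l b) with h | h
  · rwa [h]
  · exact h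

end List

namespace LTree

def graft (c u : LTree) : LTree := node u.rootLabel (c :: u.children)

@[elab_as_elim]
theorem graft_induction {motive : LTree → Prop} (leaf : ∀ r, motive (node r []))
    (graft : ∀ c u, motive c → motive u → motive (graft c u)) : ∀ t, motive t
  | node r [] => leaf r
  | node r (c :: cs) =>
    graft c (node r cs) (graft_induction leaf graft c) (graft_induction leaf graft (node r cs))

theorem labels_graft_perm (c u : LTree) : (labels (graft c u)).Perm (labels c ++ labels u) := by
  cases u
  exact List.perm_middle.symm

theorem rootLabel_mem_labels (t : LTree) : t.rootLabel ∈ labels t := by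
  cases t
  exact List.mem_cons_self

theorem isLeast_minLabel (t : LTree) : IsLeast {x | x ∈ labels t} (minLabel t) :=
  List.isLeast_foldr_min (rootLabel_mem_labels t)

theorem minLabel_mem (t : LTree) : minLabel t ∈ labels t :=
  (isLeast_minLabel t).1

theorem minLabel_eq_of_perm {s t : LTree} (h : (labels s).Perm (labels t)) :
    minLabel s = minLabel t :=
  (isLeast_minLabel s).unique (by simpa only [← h.mem_iff] using isLeast_minLabel t)

theorem minLabel_graft (c u : LTree) : minLabel (graft c u) = min (minLabel c) (minLabel u) := by
  have hset : {x | x ∈ labels (graft c u)} = {x | x ∈ labels c} ∪ {x | x ∈ labels u} := by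
    ext x
    simp [(labels_graft_perm c u).mem_iff]
  refine (isLeast_minLabel _).unique ?_
  rw [hset]
  exact (isLeast_minLabel c).union (isLeast_minLabel u)

theorem minOver_eq_minLabel (j : ℕ) (cs : List LTree) : minOver j cs = minLabel (node j cs) := by
  induction cs with
  | nil => exact (min_self j).symm
  | cons c cs ih =>
    show min (minLabel c) (minOver j cs) = minLabel (graft c (node j cs))
    rw [ih, minLabel_graft]

theorem impr_graft (c u : LTree) :
    impr (graft c u) = (if minLabel c < minLabel u then 1 else 0) + impr c + impr u := by
  obtain ⟨j, cs⟩ := u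
  show (improperEdgesAux j (c :: cs)).length = _
  rw [improperEdgesAux, minOver_eq_minLabel]
  simp only [impr, improperEdges, List.length_append]
  split_ifs <;> simp only [List.length_singleton, List.length_nil]

theorem propCount_graft (c u : LTree) :
    propCount (graft c u) = (if minLabel c < minLabel u then 0 else 1) + propCount c + propCount u := by
  obtain ⟨j, cs⟩ := u
  show (properEdgesAux j (c :: cs)).length = _
  rw [properEdgesAux, minOver_eq_minLabel]
  simp only [propCount, properEdges, List.length_append]
  split_ifs <;> simp only [List.length_singleton, List.length_nil]

def mirror : LTree → LTree
  | node r [] => node r []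
  | node r (c :: cs) => graft (mirror (node r cs)) (mirror c)

theorem mirror_leaf (r : ℕ) : mirror (node r []) = node r [] := by
  rw [mirror]

theorem mirror_graft (c u : LTree) : mirror (graft c u) = graft (mirror u) (mirror c) := by
  obtain ⟨r, cs⟩ := u
  rw [graft, mirror]
  rfl

theorem mirror_involutive : Function.Involutive mirror := by
  intro t
  induction t using graft_induction with
  | leaf r => rw [mirror_leaf, mirror_leaf]
  | graft c u ihc ihu => rw [mirror_graft, mirror_graft, ihc, ihu]

theorem labels_mirror_perm (t : LTree) : (labels (mirror t)).Perm (labels t) := by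
  induction t using graft_induction with
  | leaf r => rw [mirror_leaf]
  | graft c u ihc ihu =>
    rw [mirror_graft]
    exact (labels_graft_perm _ _).trans <| (ihu.append ihc).trans <|
      List.perm_append_comm.trans (labels_graft_perm c u).symm

theorem minLabel_mirror (t : LTree) : minLabel (mirror t) = minLabel t :=
  minLabel_eq_of_perm (labels_mirror_perm t)

theorem isLPT_mirror_iff {n : ℕ} {t : LTree} : IsLPT n (mirror t) ↔ IsLPT n t :=
  ⟨(labels_mirror_perm t).symm.trans, (labels_mirror_perm t).trans⟩

theorem impr_mirror {t : LTree} (ht : (labels t).Nodup) : impr (mirror t) = propCount t := by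
  induction t using graft_induction with
  | leaf r => rw [mirror_leaf]; rfl
  | graft c u ihc ihu =>
    obtain ⟨hc, hu, hcu⟩ := List.nodup_append.mp ((labels_graft_perm c u).nodup_iff.mp ht)
    have hmin : minLabel c ≠ minLabel u := hcu _ (minLabel_mem c) _ (minLabel_mem u)
    rw [mirror_graft, impr_graft, propCount_graft, minLabel_mirror, minLabel_mirror, ihc hc, ihu hu]
    split_ifs <;> omega

theorem propCount_mirror {t : LTree} (ht : (labels t).Nodup) : propCount (mirror t) = impr t := by
  have hmt : (labels (mirror t)).Nodup := (labels_mirror_perm t).nodup_iff.mpr ht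
  rw [← impr_mirror hmt, mirror_involutive t]

theorem nodup_labels_of_isLPT {n : ℕ} {t : LTree} (h : IsLPT n t) : (labels t).Nodup :=
  h.nodup_iff.mpr List.nodup_range'

end LTree

/-- For every `n ≥ 1` and `0 ≤ k ≤ n`, the number of labeled plane trees with `n`
edges having exactly `k` improper edges equals the number of labeled plane trees
with `n` edges having exactly `k` proper edges: the statistics `impr` and `prop`
are equidistributed over `𝒫ₙ`. -/
theorem improper_proper_equidistributed (n k : ℕ) (hn : 1 ≤ n) (hk : k ≤ n) :
    Nat.card {T : LTree // LTree.IsLPT n T ∧ LTree.impr T = k}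
      = Nat.card {T : LTree // LTree.IsLPT n T ∧ LTree.propCount T = k} :=
  Nat.card_congr <| (LTree.mirror_involutive.toPerm LTree.mirror).subtypeEquiv fun T => by
    rw [Function.Involutive.coe_toPerm, LTree.isLPT_mirror_iff]
    exact and_congr_right fun hT => by
      rw [LTree.propCount_mirror (LTree.nodup_labels_of_isLPT hT)]
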